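/- (The mean minimizes the shifted composite quantile objective.) Let Y be an integrable real random variable whose distribution is symmetric about its mean μ_Y = E[Y], with continuous, strictly positive density g_Y, cdf G_Y and quantile function G_Y^{-1}. Fix κ_1, …, κ_K ∈ (0,1) and define the objective E(y) = E[ Σ_{k=1}^K L_{κ_k}( Y − (G_Y^{-1}(κ_k) − G_Y^{-1}(1/2)) − y ) ], where L_κ(z) = z·(κ − 1(z ≤ 0)) is the quantile loss. Then μ_Y is the unique minimizer: μ_Y = argmin_{y ∈ ℝ} E(y). -/

import Mathlib

/-!
Fix a level `κ` and a point `a` with `G a = κ`. Pointwise,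
`L_κ(v - b) = L_κ(v - a) + (a - b) (κ - 1(v ≤ a)) + (v - b) (1(v ≤ a) - 1(v ≤ b))`;
the middle term has expectation `(a - b) (κ - G a) = 0` and the last one is nonnegative, and
positive on the interval between `a` and `b`. As the positive density lets the law of `Y` charge
every interval, `b ↦ E[L_κ(Y - b)]` is minimized exactly at `b = a`.

The density also makes `G` continuous and strictly increasing, so `Ginv (κ k)` is the unique
`a k` with `G (a k) = κ k`, and symmetry about `μY` (which is then not an atom) gives
`G μY = 1/2`, i.e. `Ginv (1/2) = μY`. Hence the `k`-th summand of `Efun y` is the check risk at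
`b = c k + y`, minimized exactly when `c k + y = a k = c k + μY`.
-/

open MeasureTheory Filter Set ProbabilityTheory
open scoped Topology

noncomputable def checkLoss (κ z : ℝ) : ℝ := z * (κ - if z ≤ 0 then 1 else 0)

noncomputable def checkGap (a b v : ℝ) : ℝ :=
  (v - b) * ((if v ≤ a then 1 else 0) - (if v ≤ b then 1 else 0))

lemma checkLoss_sub_eq (κ a b v : ℝ) :
    checkLoss κ (v - b) =
      checkLoss κ (v - a) + (a - b) * (κ - if v ≤ a then 1 else 0) + checkGap a b v := by
  simp only [checkLoss, checkGap, sub_nonpos]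
  split_ifs <;> ring

lemma checkGap_nonneg (a b v : ℝ) : 0 ≤ checkGap a b v := by
  unfold checkGap
  split_ifs <;> nlinarith

lemma checkGap_pos {a b v : ℝ} (hv : v ∈ Ioo (min a b) (max a b)) : 0 < checkGap a b v := by
  unfold checkGap
  rcases le_total a b with hab | hab
  · rw [min_eq_left hab, max_eq_right hab] at hv
    rw [if_neg hv.1.not_ge, if_pos hv.2.le]
    nlinarith [hv.2]
  · rw [min_eq_right hab, max_eq_left hab] at hv
    rw [if_pos hv.2.le, if_neg hv.1.not_ge]
    nlinarith [hv.1]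

lemma measurable_checkLoss (κ : ℝ) : Measurable (checkLoss κ) :=
  measurable_id.mul (measurable_const.sub (measurable_const.ite measurableSet_Iic measurable_const))

lemma measurable_checkGap (a b : ℝ) : Measurable (checkGap a b) := by
  have hind (c : ℝ) : Measurable fun v : ℝ => if v ≤ c then (1 : ℝ) else 0 :=
    measurable_const.ite measurableSet_Iic measurable_const
  exact (measurable_id.sub_const b).mul ((hind a).sub (hind b))

lemma abs_checkLoss_le (κ z : ℝ) : |checkLoss κ z| ≤ (|κ| + 1) * |z| := by
  rw [checkLoss, abs_mul, mul_comm]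
  gcongr
  exact (abs_sub _ _).trans (by split_ifs <;> simp)

lemma abs_checkGap_le (a b v : ℝ) : |checkGap a b v| ≤ |v - b| := by
  rw [checkGap, abs_mul]
  refine mul_le_of_le_one_right (abs_nonneg _) ?_
  split_ifs <;> norm_num

section Integral

variable {Ω : Type*} [MeasurableSpace Ω] {P : Measure Ω} [IsProbabilityMeasure P]
  {X : Ω → ℝ}

lemma cdf_map_eq_measureReal (hX : Measurable X) (y : ℝ) :
    cdf (P.map X) y = P.real {ω | X ω ≤ y} := by
  have := Measure.isProbabilityMeasure_map (μ := P) hX.aemeasurable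
  rw [cdf_eq_real, map_measureReal_apply hX measurableSet_Iic]
  rfl

lemma integrable_checkLoss (hX : Integrable X P) (κ b : ℝ) :
    Integrable (fun ω => checkLoss κ (X ω - b)) P :=
  ((hX.sub (integrable_const b)).abs.const_mul (|κ| + 1)).mono'
    ((measurable_checkLoss κ).comp_aemeasurable (hX.aemeasurable.sub_const b)).aestronglyMeasurable
    (.of_forall fun ω => abs_checkLoss_le κ (X ω - b))

lemma integrable_checkGap (hX : Integrable X P) (a b : ℝ) :
    Integrable (fun ω => checkGap a b (X ω)) P :=
  (hX.sub (integrable_const b)).abs.mono'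
    ((measurable_checkGap a b).comp_aemeasurable hX.aemeasurable).aestronglyMeasurable
    (.of_forall fun ω => abs_checkGap_le a b (X ω))

lemma integral_checkLoss_sub_eq (hXm : Measurable X) (hX : Integrable X P) {κ a : ℝ}
    (ha : cdf (P.map X) a = κ) (b : ℝ) :
    ∫ ω, checkLoss κ (X ω - b) ∂P =
      ∫ ω, checkLoss κ (X ω - a) ∂P + ∫ ω, checkGap a b (X ω) ∂P := by
  have hset : MeasurableSet {ω | X ω ≤ a} := hXm measurableSet_Iic
  have hind (ω : Ω) :
      (if X ω ≤ a then (1 : ℝ) else 0) = {ω | X ω ≤ a}.indicator (1 : Ω → ℝ) ω := by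
    simp [indicator_apply]
  have hind_int : Integrable ({ω | X ω ≤ a}.indicator (1 : Ω → ℝ)) P :=
    (integrable_const 1).indicator hset
  have hmid_int : Integrable (fun ω => (a - b) * (κ - if X ω ≤ a then 1 else 0)) P := by
    simp_rw [hind]
    exact ((integrable_const κ).sub hind_int).const_mul _
  have hmid : ∫ ω, (a - b) * (κ - if X ω ≤ a then 1 else 0) ∂P = 0 := by
    simp_rw [hind]
    rw [integral_const_mul, integral_sub (integrable_const κ) hind_int,
      integral_indicator_one hset, ← cdf_map_eq_measureReal hXm, ha]
    simp
  have hsum_int : Integrable (fun ω =>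
      checkLoss κ (X ω - a) + (a - b) * (κ - if X ω ≤ a then 1 else 0)) P :=
    (integrable_checkLoss hX κ a).add hmid_int
  simp_rw [checkLoss_sub_eq κ a b]
  rw [integral_add hsum_int (integrable_checkGap hX a b),
    integral_add (integrable_checkLoss hX κ a) hmid_int, hmid, add_zero]

lemma integral_checkLoss_le (hXm : Measurable X) (hX : Integrable X P) {κ a : ℝ}
    (ha : cdf (P.map X) a = κ) (b : ℝ) :
    ∫ ω, checkLoss κ (X ω - a) ∂P ≤ ∫ ω, checkLoss κ (X ω - b) ∂P := by
  rw [integral_checkLoss_sub_eq hXm hX ha b]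
  exact le_add_of_nonneg_right (integral_nonneg fun ω => checkGap_nonneg a b (X ω))

lemma integral_checkLoss_lt (hXm : Measurable X) (hX : Integrable X P) {κ a b : ℝ}
    (ha : cdf (P.map X) a = κ) (hsupp : ∀ u v, u < v → 0 < P.map X (Ioo u v)) (hb : b ≠ a) :
    ∫ ω, checkLoss κ (X ω - a) ∂P < ∫ ω, checkLoss κ (X ω - b) ∂P := by
  rw [integral_checkLoss_sub_eq hXm hX ha b]
  refine lt_add_of_pos_right _ ?_
  rw [integral_pos_iff_support_of_nonneg (fun ω => checkGap_nonneg a b (X ω))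
    (integrable_checkGap hX a b)]
  refine (hsupp _ _ (min_lt_max.2 hb.symm)).trans_le ?_
  rw [Measure.map_apply hXm measurableSet_Ioo]
  exact measure_mono fun ω hω => (checkGap_pos hω).ne'

end Integral

section Density

variable {G g : ℝ → ℝ}

lemma integrableOn_Iic_of_eq_setIntegral (hdens : ∀ y, G y = ∫ t in Iic y, g t)
    (hG : Tendsto G atTop (𝓝 1)) (y : ℝ) : IntegrableOn g (Iic y) := by
  by_contra hy
  have hzero : Tendsto G atTop (𝓝 0) := by
    refine tendsto_const_nhds.congr' ((eventually_ge_atTop y).mono fun z hz => ?_)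
    rw [hdens z]
    exact (integral_undef fun hz' : IntegrableOn g (Iic z) =>
      hy (hz'.mono_set (Iic_subset_Iic.2 hz))).symm
  exact one_ne_zero (tendsto_nhds_unique hG hzero)

lemma sub_eq_intervalIntegral_of_eq_setIntegral (hdens : ∀ y, G y = ∫ t in Iic y, g t)
    (hG : Tendsto G atTop (𝓝 1)) (a b : ℝ) : G b - G a = ∫ t in a..b, g t := by
  rw [hdens, hdens, intervalIntegral.integral_Iic_sub_Iic
    (integrableOn_Iic_of_eq_setIntegral hdens hG a) (integrableOn_Iic_of_eq_setIntegral hdens hG b)]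

lemma continuous_of_eq_setIntegral (hdens : ∀ y, G y = ∫ t in Iic y, g t)
    (hG : Tendsto G atTop (𝓝 1)) (hg : Continuous g) : Continuous G := by
  have hprim : G = fun y => G 0 + ∫ t in (0 : ℝ)..y, g t := funext fun y => by
    rw [← sub_eq_intervalIntegral_of_eq_setIntegral hdens hG, add_sub_cancel]
  rw [hprim]
  exact continuous_const.add (intervalIntegral.continuous_primitive hg.intervalIntegrable 0)

lemma strictMono_of_eq_setIntegral (hdens : ∀ y, G y = ∫ t in Iic y, g t)
    (hG : Tendsto G atTop (𝓝 1)) (hg : Continuous g) (hpos : ∀ y, 0 < g y) : StrictMono G :=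
  fun a b hab => sub_pos.1 <| (sub_eq_intervalIntegral_of_eq_setIntegral hdens hG a b).symm ▸
    intervalIntegral.intervalIntegral_pos_of_pos_on (hg.intervalIntegrable a b)
      (fun t _ => hpos t) hab

end Density

lemma StrictMono.csInf_setOf_apply_le_apply {G : ℝ → ℝ} (hG : StrictMono G) (x : ℝ) :
    sInf {y | G x ≤ G y} = x := by
  simp_rw [hG.le_iff_le]
  exact csInf_Ici

section Law

variable {ν : Measure ℝ}

lemma measure_singleton_eq_zero_of_continuous_cdf [IsProbabilityMeasure ν]
    (hcont : Continuous (cdf ν)) (t : ℝ) :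
    ν {t} = 0 := by
  rw [← measure_cdf ν, StieltjesFunction.measure_singleton,
    hcont.continuousWithinAt.leftLim_eq, sub_self, ENNReal.ofReal_zero]

lemma measure_Ioo_pos_of_strictMono_cdf [IsProbabilityMeasure ν] (hmono : StrictMono (cdf ν))
    (hcont : Continuous (cdf ν)) {u v : ℝ} (huv : u < v) : 0 < ν (Ioo u v) := by
  rw [← measure_cdf ν, StieltjesFunction.measure_Ioo, hcont.continuousWithinAt.leftLim_eq,
    ENNReal.ofReal_pos, sub_pos]
  exact hmono huv

lemma exists_cdf_eq_of_continuous (hcont : Continuous (cdf ν)) {u : ℝ} (hu : u ∈ Ioo 0 1) :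
    ∃ a, cdf ν a = u :=
  mem_range_of_exists_le_of_exists_ge hcont
    ((tendsto_cdf_atBot ν).eventually (eventually_le_nhds hu.1)).exists
    ((tendsto_cdf_atTop ν).eventually (eventually_ge_nhds hu.2)).exists

end Law

lemma cdf_map_eq_half_of_symm {Ω : Type*} [MeasurableSpace Ω] {P : Measure Ω}
    [IsProbabilityMeasure P] {X : Ω → ℝ} (hX : Measurable X) {μ : ℝ}
    (hsym : P.map (fun ω => X ω - μ) = P.map (fun ω => μ - X ω)) (hatom : P.map X {μ} = 0) :
    cdf (P.map X) μ = 1 / 2 := by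
  have := Measure.isProbabilityMeasure_map (μ := P) hX.aemeasurable
  have hIic_Ici : P.map X (Iic μ) = P.map X (Ici μ) := by
    have h := congrArg (fun m : Measure ℝ => m (Iic 0)) hsym
    rw [Measure.map_apply (hX.sub_const μ) measurableSet_Iic,
      Measure.map_apply (hX.const_sub μ) measurableSet_Iic] at h
    rw [Measure.map_apply hX measurableSet_Iic, Measure.map_apply hX measurableSet_Ici]
    convert h using 2 <;> ext ω <;> simp
  have hsplit := measureReal_union_add_inter (μ := P.map X) (s := Iic μ) measurableSet_Ici
  rw [Iic_union_Ici, Iic_inter_Ici, Icc_self, probReal_univ, measureReal_def, measureReal_def,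
    measureReal_def (s := Ici μ), hatom, ← hIic_Ici, ENNReal.toReal_zero, add_zero] at hsplit
  rw [cdf_eq_real, measureReal_def]
  linarith

theorem statement18_general {Ω : Type*} [MeasurableSpace Ω] (P : Measure Ω) [IsProbabilityMeasure P]
    (Y : Ω → ℝ) (hYmeas : Measurable Y) (hInt : Integrable Y P)
    (μY : ℝ)
    (hsym : P.map (fun ω => Y ω - μY) = P.map (fun ω => μY - Y ω))
    (G g : ℝ → ℝ) (hG : ∀ y, G y = (P {ω | Y ω ≤ y}).toReal)
    (hgcont : Continuous g) (hgpos : ∀ y, 0 < g y)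
    (hdens : ∀ y, G y = ∫ t in Set.Iic y, g t)
    (K : ℕ) (hK : 0 < K) (κ : Fin K → ℝ) (hκ : ∀ k, κ k ∈ Set.Ioo (0 : ℝ) 1)
    (L : ℝ → ℝ → ℝ) (hL : ∀ c z, L c z = z * (c - if z ≤ 0 then 1 else 0))
    (Ginv : ℝ → ℝ) (hGinv : ∀ u, Ginv u = sInf {x : ℝ | u ≤ G x})
    (c : Fin K → ℝ) (hc : ∀ k, c k = Ginv (κ k) - Ginv (1 / 2))
    (Efun : ℝ → ℝ) (hE : ∀ y, Efun y = ∫ ω, ∑ k, L (κ k) (Y ω - c k - y) ∂P) :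
    (∀ y : ℝ, Efun μY ≤ Efun y) ∧ ∀ y : ℝ, Efun y ≤ Efun μY → y = μY := by
  have : IsProbabilityMeasure (P.map Y) := Measure.isProbabilityMeasure_map hYmeas.aemeasurable
  obtain rfl : G = cdf (P.map Y) :=
    funext fun y => (hG y).trans (cdf_map_eq_measureReal hYmeas y).symm
  have hGtop := tendsto_cdf_atTop (P.map Y)
  have hmono := strictMono_of_eq_setIntegral hdens hGtop hgcont hgpos
  have hcont := continuous_of_eq_setIntegral hdens hGtop hgcont
  have hmed := cdf_map_eq_half_of_symm hYmeas hsym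
    (measure_singleton_eq_zero_of_continuous_cdf hcont μY)
  choose a ha using fun k => exists_cdf_eq_of_continuous hcont (hκ k)
  have hshift (k : Fin K) : c k + μY = a k := by
    rw [hc, hGinv, hGinv, ← ha k, ← hmed, hmono.csInf_setOf_apply_le_apply,
      hmono.csInf_setOf_apply_le_apply, sub_add_cancel]
  obtain rfl : L = checkLoss := funext₂ hL
  have hEsum (y : ℝ) : Efun y = ∑ k, ∫ ω, checkLoss (κ k) (Y ω - (c k + y)) ∂P := by
    simp_rw [hE, sub_sub]
    exact integral_finsetSum _ fun k _ => integrable_checkLoss hInt (κ k) (c k + y)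
  refine ⟨fun y => ?_, fun y hy => ?_⟩
  · simp_rw [hEsum, hshift]
    exact Finset.sum_le_sum fun k _ => integral_checkLoss_le hYmeas hInt (ha k) _
  · by_contra hne
    have : Nonempty (Fin K) := ⟨⟨0, hK⟩⟩
    have hlt := Finset.sum_lt_sum_of_nonempty Finset.univ_nonempty fun k _ =>
      integral_checkLoss_lt hYmeas hInt (ha k)
        (fun _ _ => measure_Ioo_pos_of_strictMono_cdf hmono hcont) (b := c k + y)
        (by rw [← hshift k]; exact fun h => hne (add_left_cancel h))
    simp_rw [hEsum, hshift] at hy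
    exact hy.not_gt hlt

/-- The mean minimizes the shifted composite quantile objective: for
an integrable real random variable `Y` whose law is symmetric about its mean `μ_Y`, with
continuous strictly positive density `g`, cdf `G` and quantile function `Ginv`, levels
`κ_k ∈ (0,1)`, shifts `c_k = Ginv(κ_k) − Ginv(1/2)` and objective
`E(y) = E[∑_k L_{κ_k}(Y − c_k − y)]` (with `L_κ(z) = z (κ − 1(z ≤ 0))`),
the mean `μ_Y` is the unique minimizer of `E`. -/
theorem statement18 {Ω : Type*} [MeasurableSpace Ω] (P : Measure Ω) [IsProbabilityMeasure P]
    (Y : Ω → ℝ) (hYmeas : Measurable Y) (hInt : Integrable Y P)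
    (μY : ℝ) (hμ : ∫ ω, Y ω ∂P = μY)
    (hsym : P.map (fun ω => Y ω - μY) = P.map (fun ω => μY - Y ω))
    (G g : ℝ → ℝ) (hG : ∀ y, G y = (P {ω | Y ω ≤ y}).toReal)
    (hgcont : Continuous g) (hgpos : ∀ y, 0 < g y)
    (hdens : ∀ y, G y = ∫ t in Set.Iic y, g t)
    (K : ℕ) (hK : 0 < K) (κ : Fin K → ℝ) (hκ : ∀ k, κ k ∈ Set.Ioo (0 : ℝ) 1)
    (L : ℝ → ℝ → ℝ) (hL : ∀ c z, L c z = z * (c - if z ≤ 0 then 1 else 0))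
    (Ginv : ℝ → ℝ) (hGinv : ∀ u, Ginv u = sInf {x : ℝ | u ≤ G x})
    (c : Fin K → ℝ) (hc : ∀ k, c k = Ginv (κ k) - Ginv (1 / 2))
    (Efun : ℝ → ℝ) (hE : ∀ y, Efun y = ∫ ω, ∑ k, L (κ k) (Y ω - c k - y) ∂P) :
    (∀ y : ℝ, Efun μY ≤ Efun y) ∧ ∀ y : ℝ, Efun y ≤ Efun μY → y = μY :=
  statement18_general P Y hYmeas hInt μY hsym G g hG hgcont hgpos hdens K hK κ hκ L hL Ginv hGinv c
    hc Efun hE
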